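/- If the energy–momentum endomorphism Q is positive semidefinite (i.e. ⟨λ, Qλ⟩ ≥ 0 for every λ ∈ ℂ⁴) and the three vectors c, c', J are linearly dependent (equivalently V = 0, i.e. c·(c'×J) = 0), then E₀ ≥ √(L² + 2·A²). -/

import Mathlib

open Matrix Complex ComplexOrder

/-- The energy–momentum endomorphism `Q` of an asymptotically anti-de Sitter
initial data set, as a 4×4 complex matrix. -/
noncomputable def QMatrix (E₀ c₁ c₂ c₃ c₁' c₂' c₃' J₁ J₂ J₃ : ℝ) :
    Matrix (Fin 4) (Fin 4) ℂ :=
  let w₁ : ℂ := (c₃' : ℂ) - I * J₃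
  let w₂p : ℂ := -(c₁' : ℂ) + (J₂ : ℂ) + I * ((c₂' : ℂ) + J₁)
  let w₂m : ℂ := -(c₁' : ℂ) - (J₂ : ℂ) - I * ((c₂' : ℂ) - J₁)
  !![(E₀ : ℂ) - c₃, (c₁ : ℂ) - I * c₂, w₁, w₂p;
     (c₁ : ℂ) + I * c₂, (E₀ : ℂ) + c₃, w₂m, -w₁;
     starRingEnd ℂ w₁, starRingEnd ℂ w₂m, (E₀ : ℂ) + c₃, -(c₁ : ℂ) + I * c₂;
     starRingEnd ℂ w₂p, -(starRingEnd ℂ w₁), -(c₁ : ℂ) - I * c₂, (E₀ : ℂ) - c₃]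

/-! Since `Q(E₀) = Q(0) + E₀ • 1`, the eigenvalues of `Q(E₀)` are the numbers `E₀ - s` with
`det Q(s) = 0`, and `det Q(s) = (s² - L²)² - 4A⁴ + 8sV³`. When `V = 0`, the value
`s = √(L² + 2A²)` is a root, so `E₀ - √(L² + 2A²)` is an eigenvalue of `Q`, which is nonnegative
because `Q` is positive semidefinite. -/

theorem Matrix.det_fin_four {R : Type*} [CommRing R] (A : Matrix (Fin 4) (Fin 4) R) :
    A.det =
      A 0 0 * (A 1 1 * (A 2 2 * A 3 3 - A 2 3 * A 3 2) - A 1 2 * (A 2 1 * A 3 3 - A 2 3 * A 3 1)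
        + A 1 3 * (A 2 1 * A 3 2 - A 2 2 * A 3 1))
    - A 0 1 * (A 1 0 * (A 2 2 * A 3 3 - A 2 3 * A 3 2) - A 1 2 * (A 2 0 * A 3 3 - A 2 3 * A 3 0)
        + A 1 3 * (A 2 0 * A 3 2 - A 2 2 * A 3 0))
    + A 0 2 * (A 1 0 * (A 2 1 * A 3 3 - A 2 3 * A 3 1) - A 1 1 * (A 2 0 * A 3 3 - A 2 3 * A 3 0)
        + A 1 3 * (A 2 0 * A 3 1 - A 2 1 * A 3 0))
    - A 0 3 * (A 1 0 * (A 2 1 * A 3 2 - A 2 2 * A 3 1) - A 1 1 * (A 2 0 * A 3 2 - A 2 2 * A 3 0)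
        + A 1 2 * (A 2 0 * A 3 1 - A 2 1 * A 3 0)) := by
  rw [det_succ_row_zero]
  simp [Fin.sum_univ_succ, det_fin_three, Fin.succAbove]
  ring

theorem Matrix.PosSemidef.nonneg_of_det_sub_smul_one_eq_zero {n R : Type*} [Fintype n]
    [DecidableEq n] [Field R] [PartialOrder R] [StarRing R] [StarOrderedRing R]
    [MulPosReflectLE R] {M : Matrix n n R} (hM : M.PosSemidef) {t : R}
    (ht : (M - t • 1).det = 0) : 0 ≤ t := by
  obtain ⟨v, hv, hMv⟩ := exists_mulVec_eq_zero_iff.mpr ht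
  have h_eigen : M *ᵥ v = t • v := by
    rwa [sub_mulVec, smul_mulVec, one_mulVec, sub_eq_zero] at hMv
  have h_nonneg : 0 * (star v ⬝ᵥ v) ≤ t * (star v ⬝ᵥ v) := by
    simpa [h_eigen] using hM.dotProduct_mulVec_nonneg v
  exact le_of_mul_le_mul_right h_nonneg (dotProduct_star_self_pos_iff.mpr hv)

theorem QMatrix_sub_smul_one (E₀ t c₁ c₂ c₃ c₁' c₂' c₃' J₁ J₂ J₃ : ℝ) :
    QMatrix E₀ c₁ c₂ c₃ c₁' c₂' c₃' J₁ J₂ J₃ - (t : ℂ) • 1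
      = QMatrix (E₀ - t) c₁ c₂ c₃ c₁' c₂' c₃' J₁ J₂ J₃ := by
  ext i j
  fin_cases i <;> fin_cases j <;> simp [QMatrix] <;> ring

theorem det_QMatrix (E₀ c₁ c₂ c₃ c₁' c₂' c₃' J₁ J₂ J₃ : ℝ) :
    (QMatrix E₀ c₁ c₂ c₃ c₁' c₂' c₃' J₁ J₂ J₃).det =
      (((E₀ ^ 2 - (![c₁, c₂, c₃] ⬝ᵥ ![c₁, c₂, c₃]
          + ![c₁', c₂', c₃'] ⬝ᵥ ![c₁', c₂', c₃'] + ![J₁, J₂, J₃] ⬝ᵥ ![J₁, J₂, J₃])) ^ 2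
        - 4 * ((![c₁, c₂, c₃] ⨯₃ ![c₁', c₂', c₃']) ⬝ᵥ (![c₁, c₂, c₃] ⨯₃ ![c₁', c₂', c₃'])
          + (![c₁, c₂, c₃] ⨯₃ ![J₁, J₂, J₃]) ⬝ᵥ (![c₁, c₂, c₃] ⨯₃ ![J₁, J₂, J₃])
          + (![c₁', c₂', c₃'] ⨯₃ ![J₁, J₂, J₃]) ⬝ᵥ (![c₁', c₂', c₃'] ⨯₃ ![J₁, J₂, J₃]))
        + 8 * E₀ * (![c₁, c₂, c₃] ⬝ᵥ (![c₁', c₂', c₃'] ⨯₃ ![J₁, J₂, J₃])) : ℝ) : ℂ) := by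
  rw [det_fin_four]
  simp only [QMatrix, of_apply, cons_val', cons_val_zero, cons_val_one, cons_val_two,
    cons_val_three, head_cons, head_fin_const, tail_cons, empty_val', cons_val_fin_one,
    map_sub, map_add, map_neg, map_mul, conj_ofReal, conj_I]
  simp only [cross_apply, dotProduct, Fin.sum_univ_three, cons_val_zero, cons_val_one,
    cons_val_two, head_cons, tail_cons]
  apply Complex.ext <;>
    simp only [add_re, add_im, sub_re, sub_im, mul_re, mul_im, neg_re, neg_im, ofReal_re,
      ofReal_im, I_re, I_im] <;> ring

theorem positive_energy_theorem_degenerate_general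
    (E₀ c₁ c₂ c₃ c₁' c₂' c₃' J₁ J₂ J₃ L A : ℝ)
    (hL : L ^ 2 = ![c₁, c₂, c₃] ⬝ᵥ ![c₁, c₂, c₃]
      + ![c₁', c₂', c₃'] ⬝ᵥ ![c₁', c₂', c₃'] + ![J₁, J₂, J₃] ⬝ᵥ ![J₁, J₂, J₃])
    (hA : A ^ 4 =
        (![c₁, c₂, c₃] ⨯₃ ![c₁', c₂', c₃']) ⬝ᵥ (![c₁, c₂, c₃] ⨯₃ ![c₁', c₂', c₃'])
      + (![c₁, c₂, c₃] ⨯₃ ![J₁, J₂, J₃]) ⬝ᵥ (![c₁, c₂, c₃] ⨯₃ ![J₁, J₂, J₃])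
      + (![c₁', c₂', c₃'] ⨯₃ ![J₁, J₂, J₃]) ⬝ᵥ (![c₁', c₂', c₃'] ⨯₃ ![J₁, J₂, J₃]))
    (hdep : ![c₁, c₂, c₃] ⬝ᵥ (![c₁', c₂', c₃'] ⨯₃ ![J₁, J₂, J₃]) = 0)
    (hQ : (QMatrix E₀ c₁ c₂ c₃ c₁' c₂' c₃' J₁ J₂ J₃).PosSemidef) :
    E₀ ≥ Real.sqrt (L ^ 2 + 2 * A ^ 2) := by
  set s := Real.sqrt (L ^ 2 + 2 * A ^ 2)
  have hs : s ^ 2 = L ^ 2 + 2 * A ^ 2 := Real.sq_sqrt (by positivity)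
  have h_singular : (QMatrix s c₁ c₂ c₃ c₁' c₂' c₃' J₁ J₂ J₃).det = 0 := by
    rw [det_QMatrix, ← hL, ← hA, hdep, hs]
    push_cast; ring
  have h_shift := QMatrix_sub_smul_one E₀ (E₀ - s) c₁ c₂ c₃ c₁' c₂' c₃' J₁ J₂ J₃
  rw [sub_sub_cancel] at h_shift
  have h_gap := hQ.nonneg_of_det_sub_smul_one_eq_zero (h_shift ▸ h_singular)
  exact sub_nonneg.mp (Complex.zero_le_real.mp h_gap)

/-- If the energy–momentum endomorphism `Q` is positive semidefinite and the three
vectors `c`, `c'`, `J` are linearly dependent (i.e. `V = 0`, `c·(c'×J) = 0`), then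
`E₀ ≥ √(L² + 2·A²)`. -/
theorem positive_energy_theorem_degenerate
    (E₀ c₁ c₂ c₃ c₁' c₂' c₃' J₁ J₂ J₃ L A : ℝ)
    (hL0 : 0 ≤ L)
    (hL : L ^ 2 = ![c₁, c₂, c₃] ⬝ᵥ ![c₁, c₂, c₃]
      + ![c₁', c₂', c₃'] ⬝ᵥ ![c₁', c₂', c₃'] + ![J₁, J₂, J₃] ⬝ᵥ ![J₁, J₂, J₃])
    (hA0 : 0 ≤ A)
    (hA : A ^ 4 =
        (![c₁, c₂, c₃] ⨯₃ ![c₁', c₂', c₃']) ⬝ᵥ (![c₁, c₂, c₃] ⨯₃ ![c₁', c₂', c₃'])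
      + (![c₁, c₂, c₃] ⨯₃ ![J₁, J₂, J₃]) ⬝ᵥ (![c₁, c₂, c₃] ⨯₃ ![J₁, J₂, J₃])
      + (![c₁', c₂', c₃'] ⨯₃ ![J₁, J₂, J₃]) ⬝ᵥ (![c₁', c₂', c₃'] ⨯₃ ![J₁, J₂, J₃]))
    (hdep : ![c₁, c₂, c₃] ⬝ᵥ (![c₁', c₂', c₃'] ⨯₃ ![J₁, J₂, J₃]) = 0)
    (hQ : (QMatrix E₀ c₁ c₂ c₃ c₁' c₂' c₃' J₁ J₂ J₃).PosSemidef) :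
    E₀ ≥ Real.sqrt (L ^ 2 + 2 * A ^ 2) :=
  positive_energy_theorem_degenerate_general E₀ c₁ c₂ c₃ c₁' c₂' c₃' J₁ J₂ J₃ L A hL hA hdep hQ
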